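/- Let L be a bounded lattice and Y = D̄♭(L) = (SPH(L,2_B), E). Then the complete lattice C(Y) = MPE(Y,2), ordered by φ ≤ ψ iff φ⁻¹(1) ⊆ ψ⁻¹(1), together with the embedding a ↦ ē_a, is a canonical extension of L: a completion of L that is both dense and compact. -/

import Mathlib

namespace CanExt

open Classical

/-- A partial map from `X` into the two-element chain `{0,1}` (encoded as `Bool`,
with `false` playing the role of `0` and `true` the role of `1`);
`φ x = none` means `x` is outside the domain of `φ`. -/
abbrev PMap (X : Type*) := X → Option Bool

/-- The preimage of `1` of a partial map. -/
def pre1 {X : Type*} (φ : PMap X) : Set X := {x | φ x = some true}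

/-- The preimage of `0` of a partial map. -/
def pre0 {X : Type*} (φ : PMap X) : Set X := {x | φ x = some false}

/-- A partial map is `E`-preserving if whenever `x, y` lie in its domain and
`(x,y) ∈ E`, then `φ x ≤ φ y`. -/
def EPres {X : Type*} (E : X → X → Prop) (φ : PMap X) : Prop :=
  ∀ ⦃x y : X⦄, E x y → ∀ ⦃a b : Bool⦄, φ x = some a → φ y = some b → a ≤ b

/-- `PExt ψ φ` : the partial map `ψ` extends the partial map `φ`. -/
def PExt {X : Type*} (ψ φ : PMap X) : Prop :=
  ∀ ⦃x : X⦄ ⦃a : Bool⦄, φ x = some a → ψ x = some a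

/-- The set of maximal partial `E`-preserving maps from `(X,E)` into the
two-element chain `2`. -/
def MPE {X : Type*} (E : X → X → Prop) : Set (PMap X) :=
  {φ | EPres E φ ∧ ∀ ψ : PMap X, EPres E ψ → PExt ψ φ → ψ = φ}

/-- A partial morphism from a graph with topology `(X,E,t)` to `2_τ`:
the preimages of `1` and `0` are `t`-closed (equivalently, the domain is
closed and the restriction to the domain is continuous into discrete `2`),
and the map is `E`-preserving. -/
def PMorphT {X : Type*} (E : X → X → Prop) (t : TopologicalSpace X) (φ : PMap X) : Prop :=
  EPres E φ ∧ @IsClosed X t (pre1 φ) ∧ @IsClosed X t (pre0 φ)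

/-- The set of maximal partial morphisms from `(X,E,t)` to `2_τ`. -/
def MPM {X : Type*} (E : X → X → Prop) (t : TopologicalSpace X) : Set (PMap X) :=
  {φ | PMorphT E t φ ∧ ∀ ψ : PMap X, PMorphT E t ψ → PExt ψ φ → ψ = φ}

/-- The relation `E` between partial maps on a lattice `L`:
`(f,g) ∈ E` iff `f x ≤ g x` for all `x ∈ dom f ∩ dom g`. -/
def ErelP {L : Type*} (f g : PMap L) : Prop :=
  ∀ ⦃x : L⦄ ⦃a b : Bool⦄, f x = some a → g x = some b → a ≤ b

/-- `f ≤₁ g` iff `f⁻¹(1) ⊆ g⁻¹(1)`. -/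
def le1 {L : Type*} (f g : PMap L) : Prop := pre1 f ⊆ pre1 g

/-- `f ≤₂ g` iff `f⁻¹(0) ⊆ g⁻¹(0)`. -/
def le2 {L : Type*} (f g : PMap L) : Prop := pre0 f ⊆ pre0 g

section Lat

variable (L : Type*) [Lattice L] [BoundedOrder L]

/-- A partial homomorphism from a bounded lattice `L` to the two-element
bounded lattice `2_B`: its domain is a `{0,1}`-sublattice of `L` and the
restriction to the domain is a bounded-lattice homomorphism. -/
def PHom (f : PMap L) : Prop :=
  f ⊥ = some false ∧ f ⊤ = some true ∧
  ∀ ⦃a b : L⦄ ⦃x y : Bool⦄, f a = some x → f b = some y →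
    f (a ⊓ b) = some (x ⊓ y) ∧ f (a ⊔ b) = some (x ⊔ y)

/-- The set of maximal partial homomorphisms (MPHs) from `L` to `2_B`. -/
def MPHset : Set (PMap L) := {f | PHom L f ∧ ∀ g : PMap L, PHom L g → PExt g f → g = f}

/-- The underlying set of the graph `D♭(L)`. -/
abbrev MPHsub := {f : PMap L // f ∈ MPHset L}

/-- The relation `E` on `MPH(L, 2_B)`, giving the graph `D♭(L)`. -/
def EM (f g : MPHsub L) : Prop := ErelP f.1 g.1

/-- The evaluation map `e_a` on `MPH(L,2_B)` : `e_a(f) = f(a)` if `a ∈ dom f`. -/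
def evalM (a : L) : PMap (MPHsub L) := fun f => f.1 a

/-- `V_a = {f ∈ MPH(L,2_B) : f(a) = 0}`. -/
def VaM (a : L) : Set (MPHsub L) := {f | f.1 a = some false}

/-- `W_a = {f ∈ MPH(L,2_B) : f(a) = 1}`. -/
def WaM (a : L) : Set (MPHsub L) := {f | f.1 a = some true}

/-- The topology on `MPH(L,2_B)` with the sets `V_a`, `W_a` as a subbasis of
closed sets. -/
def tauM : TopologicalSpace (MPHsub L) :=
  TopologicalSpace.generateFrom {U | ∃ a : L, U = (VaM L a)ᶜ ∨ U = (WaM L a)ᶜ}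

/-- A (nonempty) lattice filter. -/
def IsLatFilter (F : Set L) : Prop :=
  F.Nonempty ∧ (∀ ⦃a b : L⦄, a ∈ F → a ≤ b → b ∈ F) ∧
    (∀ ⦃a b : L⦄, a ∈ F → b ∈ F → a ⊓ b ∈ F)

/-- A (nonempty) lattice ideal. -/
def IsLatIdeal (I : Set L) : Prop :=
  I.Nonempty ∧ (∀ ⦃a b : L⦄, a ∈ I → b ≤ a → b ∈ I) ∧
    (∀ ⦃a b : L⦄, a ∈ I → b ∈ I → a ⊔ b ∈ I)

/-- The set of special partial homomorphisms (SPHs) from `L` to `2_B`: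
`f⁻¹(1)` is a nonempty filter, `f⁻¹(0)` is a nonempty ideal, and they are
disjoint. -/
def SPHset : Set (PMap L) :=
  {f | IsLatFilter L (pre1 f) ∧ IsLatIdeal L (pre0 f) ∧ Disjoint (pre1 f) (pre0 f)}

/-- The underlying set of the graph `D̄♭(L)`. -/
abbrev SPHsub := {f : PMap L // f ∈ SPHset L}

/-- The relation `E` on `SPH(L, 2_B)`, giving the graph `D̄♭(L)`. -/
def ES (f g : SPHsub L) : Prop := ErelP f.1 g.1

/-- The evaluation map `ē_a` on `SPH(L,2_B)`. -/
def evalS (a : L) : PMap (SPHsub L) := fun f => f.1 a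

/-- `V_a = {f ∈ SPH(L,2_B) : f(a) = 0}`. -/
def VaS (a : L) : Set (SPHsub L) := {f | f.1 a = some false}

/-- `W_a = {f ∈ SPH(L,2_B) : f(a) = 1}`. -/
def WaS (a : L) : Set (SPHsub L) := {f | f.1 a = some true}

/-- The topology on `SPH(L,2_B)` with the sets `V_a`, `W_a` as a subbasis of
closed sets. -/
def tauS : TopologicalSpace (SPHsub L) :=
  TopologicalSpace.generateFrom {U | ∃ a : L, U = (VaS L a)ᶜ ∨ U = (WaS L a)ᶜ}

/-- The carrier of the completion built from `D♭(L)`. -/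
abbrev CX := {φ : PMap (MPHsub L) // φ ∈ MPE (EM L)}

/-- The carrier of the completion built from `D̄♭(L)`. -/
abbrev CY := {φ : PMap (SPHsub L) // φ ∈ MPE (ES L)}

end Lat

/-! On a reflexive graph `(X, E)` a maximal partial `E`-preserving map into `2` is the same as a
formal concept of the relation `¬E`: its preimages of `1` and `0` are each other's polars. So
`C(Y)` is the concept lattice of `¬E` on `SPH(L, 2_B)`, and `ē_a` is the concept `(W_a, V_a)`.
Meets of concepts are intersections of extents and joins are intersections of intents, which gives
`ē_{a ⊓ b} = ē_a ⊓ ē_b` and `ē_{a ⊔ b} = ē_a ⊔ ē_b`. An SPH `f` in the extent of a concept lies in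
the extent of the meet of the `ē_a` with `f(a) = 1`, which is below the concept; dually for
intents, and this is density. For compactness, if no finite subfamilies work, the filter generated
by `A` and the ideal generated by `B` are disjoint, so together they form an SPH lying in the
extent of `⋀ ē(A) ≤ ⋁ ē(B)` and in the intent of `⋁ ē(B)`, which contradicts the reflexivity of
`E`. -/

open Set

section PartialMaps

variable {X : Type*}

theorem PMap.ext {φ ψ : PMap X} (h1 : pre1 φ = pre1 ψ) (h0 : pre0 φ = pre0 ψ) : φ = ψ := by
  funext x
  rcases hφ : φ x with _ | _ | _
  · rcases hψ : ψ x with _ | _ | _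
    · rfl
    · exact absurd (h0 ▸ hψ : x ∈ pre0 φ) (by simp [pre0, hφ])
    · exact absurd (h1 ▸ hψ : x ∈ pre1 φ) (by simp [pre1, hφ])
  · exact ((Set.ext_iff.1 h0 x).1 hφ).symm
  · exact ((Set.ext_iff.1 h1 x).1 hφ).symm

theorem disjoint_pre1_pre0 (φ : PMap X) : Disjoint (pre1 φ) (pre0 φ) :=
  Set.disjoint_left.2 fun x (h1 : φ x = some true) (h0 : φ x = some false) => by simp [h1] at h0

theorem pExt_iff {φ ψ : PMap X} : PExt ψ φ ↔ pre1 φ ⊆ pre1 ψ ∧ pre0 φ ⊆ pre0 ψ := by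
  refine ⟨fun h => ⟨fun x hx => h hx, fun x hx => h hx⟩, fun ⟨h1, h0⟩ x a hx => ?_⟩
  cases a
  exacts [h0 hx, h1 hx]

theorem ePres_iff {E : X → X → Prop} {φ : PMap X} :
    EPres E φ ↔ pre0 φ ⊆ upperPolar Eᶜ (pre1 φ) := by
  refine ⟨fun h y hy x hx hxy => absurd (h hxy hx hy) (by decide), fun h x y hxy a b hx hy => ?_⟩
  cases a
  · exact Bool.false_le b
  cases b
  · exact absurd hxy (h hy hx)
  · exact le_rfl

noncomputable def ofPre (A B : Set X) : PMap X :=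
  fun x => if x ∈ A then some true else if x ∈ B then some false else none

theorem pre1_ofPre (A B : Set X) : pre1 (ofPre A B) = A := by
  ext x
  by_cases hA : x ∈ A <;> simp [pre1, ofPre, hA]

theorem pre0_ofPre {A B : Set X} (h : Disjoint A B) : pre0 (ofPre A B) = B := by
  ext x
  by_cases hA : x ∈ A <;> by_cases hB : x ∈ B <;> simp [pre0, ofPre, hA, hB]
  exact Set.disjoint_left.1 h hA hB

theorem ofPre_pre1_pre0 (φ : PMap X) : ofPre (pre1 φ) (pre0 φ) = φ :=
  PMap.ext (pre1_ofPre _ _) (pre0_ofPre (disjoint_pre1_pre0 φ))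

end PartialMaps

section MaximalPartialMaps

variable {X : Type*} {E : X → X → Prop}

theorem ePres_ofPre {A B : Set X} (hAB : Disjoint A B) (hpol : B ⊆ upperPolar Eᶜ A) :
    EPres E (ofPre A B) := by
  rwa [ePres_iff, pre1_ofPre, pre0_ofPre hAB]

theorem pre_eq_of_mem_MPE {φ : PMap X} (hφ : φ ∈ MPE E) {A B : Set X} (hA : pre1 φ ⊆ A)
    (hB : pre0 φ ⊆ B) (hAB : Disjoint A B) (hpol : B ⊆ upperPolar Eᶜ A) :
    pre1 φ = A ∧ pre0 φ = B := by
  have h := hφ.2 (ofPre A B) (ePres_ofPre hAB hpol)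
    (pExt_iff.2 ⟨by rwa [pre1_ofPre], by rwa [pre0_ofPre hAB]⟩)
  rw [← h, pre1_ofPre, pre0_ofPre hAB]
  exact ⟨rfl, rfl⟩

variable [Std.Refl E]

theorem pre0_eq_upperPolar_of_mem_MPE {φ : PMap X} (hφ : φ ∈ MPE E) :
    pre0 φ = upperPolar Eᶜ (pre1 φ) := by
  refine (ePres_iff.1 hφ.1).antisymm fun y hy => ?_
  have hy1 : y ∉ pre1 φ := fun h => hy h (refl y)
  have h := pre_eq_of_mem_MPE hφ subset_rfl (subset_insert y _)
    (disjoint_insert_right.2 ⟨hy1, disjoint_pre1_pre0 φ⟩)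
    (insert_subset hy (ePres_iff.1 hφ.1))
  exact h.2 ▸ mem_insert y _

theorem pre1_eq_lowerPolar_of_mem_MPE {φ : PMap X} (hφ : φ ∈ MPE E) :
    pre1 φ = lowerPolar Eᶜ (pre0 φ) := by
  have hEP := subset_upperPolar_iff_subset_lowerPolar.1 (ePres_iff.1 hφ.1)
  refine hEP.antisymm fun y hy => ?_
  have hy0 : y ∉ pre0 φ := fun h => hy h (refl y)
  have h := pre_eq_of_mem_MPE hφ (subset_insert y _) subset_rfl
    (disjoint_insert_left.2 ⟨hy0, disjoint_pre1_pre0 φ⟩)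
    (subset_upperPolar_iff_subset_lowerPolar.2 (insert_subset hy hEP))
  exact h.1 ▸ mem_insert y _

instance : Std.Irrefl Eᶜ where
  irrefl x h := h (refl x)

theorem ofPre_mem_MPE (c : Concept X X Eᶜ) : ofPre c.extent c.intent ∈ MPE E := by
  have hc := c.disjoint_extent_intent
  refine ⟨ePres_ofPre hc c.upperPolar_extent.ge, fun ψ hψ hext => ?_⟩
  rw [pExt_iff, pre1_ofPre, pre0_ofPre hc] at hext
  have h0 := ePres_iff.1 hψ
  have h1 := subset_upperPolar_iff_subset_lowerPolar.1 h0
  refine PMap.ext ?_ ?_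
  · rw [pre1_ofPre]
    exact hext.1.antisymm' (c.lowerPolar_intent ▸ h1.trans (lowerPolar_anti _ hext.2))
  · rw [pre0_ofPre hc]
    exact hext.2.antisymm' (c.upperPolar_extent ▸ h0.trans (upperPolar_anti _ hext.1))

noncomputable def mpeEquivConcept : {φ // φ ∈ MPE E} ≃ Concept X X Eᶜ where
  toFun φ :=
    ⟨pre1 φ.1, pre0 φ.1, (pre0_eq_upperPolar_of_mem_MPE φ.2).symm,
      (pre1_eq_lowerPolar_of_mem_MPE φ.2).symm⟩
  invFun c := ⟨ofPre c.extent c.intent, ofPre_mem_MPE c⟩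
  left_inv φ := Subtype.ext (ofPre_pre1_pre0 φ.1)
  right_inv c := Concept.ext (pre1_ofPre c.extent c.intent)

end MaximalPartialMaps

theorem not_erelP_iff {X : Type*} {f g : PMap X} :
    ¬ ErelP f g ↔ ∃ x, f x = some true ∧ g x = some false := by
  refine ⟨fun h => ?_, fun ⟨x, hf, hg⟩ h => absurd (h hf hg) (by decide)⟩
  by_contra hne
  refine h fun x a b ha hb => ?_
  cases a
  · exact Bool.false_le b
  cases b
  · exact (hne ⟨x, ha, hb⟩).elim
  · exact le_rfl

theorem not_erelP_of_pre1_subset {X : Type*} {f f' g : PMap X} (hf : pre1 f ⊆ pre1 f')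
    (h : ¬ ErelP f g) : ¬ ErelP f' g := by
  obtain ⟨x, hfx, hgx⟩ := not_erelP_iff.1 h
  exact not_erelP_iff.2 ⟨x, hf hfx, hgx⟩

theorem not_erelP_of_pre0_subset {X : Type*} {f g g' : PMap X} (hg : pre0 g ⊆ pre0 g')
    (h : ¬ ErelP f g) : ¬ ErelP f g' := by
  obtain ⟨x, hfx, hgx⟩ := not_erelP_iff.1 h
  exact not_erelP_iff.2 ⟨x, hfx, hg hgx⟩

section SPH

variable {L : Type*} [Lattice L]

instance : Std.Refl (ES L) where
  refl f _ _ _ ha hb := by rw [ha] at hb; cases hb; exact le_rfl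

namespace SPHsub

variable (f : SPHsub L) {a b : L}

theorem apply_eq_true_of_le (ha : f.1 a = some true) (hab : a ≤ b) : f.1 b = some true :=
  f.2.1.2.1 ha hab

theorem apply_eq_false_of_le (hb : f.1 b = some false) (hab : a ≤ b) : f.1 a = some false :=
  f.2.2.1.2.1 hb hab

theorem apply_top [BoundedOrder L] : f.1 ⊤ = some true :=
  let ⟨_, ha⟩ := f.2.1.1
  f.apply_eq_true_of_le ha le_top

theorem apply_bot [BoundedOrder L] : f.1 ⊥ = some false :=
  let ⟨_, ha⟩ := f.2.2.1.1
  f.apply_eq_false_of_le ha bot_le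

theorem apply_inf_eq_true_iff : f.1 (a ⊓ b) = some true ↔ f.1 a = some true ∧ f.1 b = some true :=
  ⟨fun h => ⟨f.apply_eq_true_of_le h inf_le_left, f.apply_eq_true_of_le h inf_le_right⟩,
    fun h => f.2.1.2.2 h.1 h.2⟩

theorem apply_sup_eq_false_iff :
    f.1 (a ⊔ b) = some false ↔ f.1 a = some false ∧ f.1 b = some false :=
  ⟨fun h => ⟨f.apply_eq_false_of_le h le_sup_left, f.apply_eq_false_of_le h le_sup_right⟩,
    fun h => f.2.2.1.2.2 h.1 h.2⟩

end SPHsub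

theorem ofPre_mem_SPHset {F I : Set L} (hF : IsLatFilter L F) (hI : IsLatIdeal L I)
    (hFI : Disjoint F I) : ofPre F I ∈ SPHset L := by
  refine ⟨?_, ?_, ?_⟩ <;> simp only [pre1_ofPre, pre0_ofPre hFI] <;> assumption

theorem isLatFilter_finsetInf_upperClosure [OrderTop L] (A : Set L) :
    IsLatFilter L {c | ∃ T : Finset L, ↑T ⊆ A ∧ T.inf id ≤ c} := by
  refine ⟨⟨⊤, by exact ⟨∅, by simp, le_top⟩⟩, ?_, ?_⟩
  · rintro x y ⟨T, hT, h⟩ hxy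
    exact ⟨T, hT, h.trans hxy⟩
  · rintro x y ⟨T, hT, h⟩ ⟨T', hT', h'⟩
    refine ⟨T ∪ T', by simpa using union_subset hT hT', ?_⟩
    rw [Finset.inf_union]
    exact inf_le_inf h h'

theorem isLatIdeal_finsetSup_lowerClosure [OrderBot L] (B : Set L) :
    IsLatIdeal L {c | ∃ T : Finset L, ↑T ⊆ B ∧ c ≤ T.sup id} := by
  refine ⟨⟨⊥, by exact ⟨∅, by simp, bot_le⟩⟩, ?_, ?_⟩
  · rintro x y ⟨T, hT, h⟩ hyx
    exact ⟨T, hT, hyx.trans h⟩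
  · rintro x y ⟨T, hT, h⟩ ⟨T', hT', h'⟩
    refine ⟨T ∪ T', by simpa using union_subset hT hT', ?_⟩
    rw [Finset.sup_union]
    exact sup_le_sup h h'

theorem exists_sph_pre1_eq_Ici_pre0_eq_Iic {a b : L} (hab : ¬ a ≤ b) :
    ∃ f : SPHsub L, pre1 f.1 = Ici a ∧ pre0 f.1 = Iic b := by
  have hd : Disjoint (Ici a) (Iic b) :=
    Set.disjoint_left.2 fun _ hx hx' => hab (le_trans hx hx')
  refine ⟨⟨ofPre (Ici a) (Iic b), ofPre_mem_SPHset ?_ ?_ hd⟩, pre1_ofPre _ _, pre0_ofPre hd⟩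
  · exact ⟨nonempty_Ici, fun _ _ hx hxy => le_trans hx hxy, fun _ _ => le_inf⟩
  · exact ⟨nonempty_Iic, fun _ _ hx hyx => le_trans hyx hx, fun _ _ => sup_le⟩

theorem WaS_subset_WaS_iff {a b : L} : WaS L a ⊆ WaS L b ↔ a ≤ b := by
  refine ⟨fun h => ?_, fun hab f hf => f.apply_eq_true_of_le hf hab⟩
  by_contra hab
  obtain ⟨f, hf1, hf0⟩ := exists_sph_pre1_eq_Ici_pre0_eq_Iic hab
  have ha : f ∈ WaS L a := (Set.ext_iff.1 hf1 a).2 le_rfl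
  have hb : f.1 b = some false := (Set.ext_iff.1 hf0 b).2 le_rfl
  exact Set.disjoint_left.1 f.2.2.2 (h ha) hb

theorem upperPolar_WaS [BoundedOrder L] (a : L) : upperPolar (ES L)ᶜ (WaS L a) = VaS L a := by
  refine subset_antisymm (fun k hk => ?_) fun k hk f hf => not_erelP_iff.2 ⟨a, hf, hk⟩
  by_cases ha : a ≤ ⊥
  · exact k.apply_eq_false_of_le k.apply_bot ha
  obtain ⟨f, hf1, -⟩ := exists_sph_pre1_eq_Ici_pre0_eq_Iic ha
  obtain ⟨x, hfx, hkx⟩ := not_erelP_iff.1 (hk ((Set.ext_iff.1 hf1 a).2 le_rfl))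
  exact k.apply_eq_false_of_le hkx ((Set.ext_iff.1 hf1 x).1 hfx)

theorem lowerPolar_VaS [BoundedOrder L] (a : L) : lowerPolar (ES L)ᶜ (VaS L a) = WaS L a := by
  refine subset_antisymm (fun g hg => ?_) fun g hg k hk => not_erelP_iff.2 ⟨a, hg, hk⟩
  by_cases ha : ⊤ ≤ a
  · exact g.apply_eq_true_of_le g.apply_top ha
  obtain ⟨k, -, hk0⟩ := exists_sph_pre1_eq_Ici_pre0_eq_Iic ha
  obtain ⟨x, hgx, hkx⟩ := not_erelP_iff.1 (hg ((Set.ext_iff.1 hk0 a).2 le_rfl))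
  exact g.apply_eq_true_of_le hgx ((Set.ext_iff.1 hk0 x).1 hkx)

end SPH

section CanonicalExtension

variable {L C D : Type*} [Lattice L] [BoundedOrder L] [CompleteLattice C] [CompleteLattice D]

structure IsCanonicalExtension (e : L → C) : Prop where
  injective : Function.Injective e
  map_inf : ∀ a b, e (a ⊓ b) = e a ⊓ e b
  map_sup : ∀ a b, e (a ⊔ b) = e a ⊔ e b
  map_top : e ⊤ = ⊤
  map_bot : e ⊥ = ⊥
  sSup_meets_eq : ∀ c, sSup {x | (∃ S : Set L, x = sInf (e '' S)) ∧ x ≤ c} = c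
  sInf_joins_eq : ∀ c, sInf {x | (∃ S : Set L, x = sSup (e '' S)) ∧ c ≤ x} = c
  compact : ∀ A B : Set L, sInf (e '' A) ≤ sSup (e '' B) →
    ∃ A' B' : Finset L, ↑A' ⊆ A ∧ ↑B' ⊆ B ∧ sInf (e '' ↑A') ≤ sSup (e '' ↑B')

theorem IsCanonicalExtension.orderIso_comp {e : L → C} (he : IsCanonicalExtension e)
    (o : C ≃o D) : IsCanonicalExtension (o ∘ e) := by
  have hInf (S : Set L) : sInf ((o ∘ e) '' S) = o (sInf (e '' S)) := by
    rw [image_comp, o.map_sInf, sInf_image]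
  have hSup (S : Set L) : sSup ((o ∘ e) '' S) = o (sSup (e '' S)) := by
    rw [image_comp, o.map_sSup, sSup_image]
  refine ⟨o.injective.comp he.injective, fun a b => ?_, fun a b => ?_, ?_, ?_, fun d => ?_,
    fun d => ?_, fun A B h => ?_⟩
  · simp only [Function.comp_apply, he.map_inf, o.map_inf]
  · simp only [Function.comp_apply, he.map_sup, o.map_sup]
  · simp only [Function.comp_apply, he.map_top, o.map_top]
  · simp only [Function.comp_apply, he.map_bot, o.map_bot]
  · have hset : {y | (∃ S : Set L, y = sInf ((o ∘ e) '' S)) ∧ y ≤ d} =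
        o '' {x | (∃ S : Set L, x = sInf (e '' S)) ∧ x ≤ o.symm d} := by
      ext y
      simp only [hInf]
      constructor
      · rintro ⟨⟨S, rfl⟩, hy⟩
        exact ⟨_, ⟨⟨S, rfl⟩, o.le_symm_apply.2 hy⟩, rfl⟩
      · rintro ⟨x, ⟨⟨S, rfl⟩, hx⟩, rfl⟩
        exact ⟨⟨S, rfl⟩, o.le_symm_apply.1 hx⟩
    rw [hset, sSup_image, ← o.map_sSup, he.sSup_meets_eq, o.apply_symm_apply]
  · have hset : {y | (∃ S : Set L, y = sSup ((o ∘ e) '' S)) ∧ d ≤ y} =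
        o '' {x | (∃ S : Set L, x = sSup (e '' S)) ∧ o.symm d ≤ x} := by
      ext y
      simp only [hSup]
      constructor
      · rintro ⟨⟨S, rfl⟩, hy⟩
        exact ⟨_, ⟨⟨S, rfl⟩, o.symm_apply_le.2 hy⟩, rfl⟩
      · rintro ⟨x, ⟨⟨S, rfl⟩, hx⟩, rfl⟩
        exact ⟨⟨S, rfl⟩, o.symm_apply_le.1 hx⟩
    rw [hset, sInf_image, ← o.map_sInf, he.sInf_joins_eq, o.apply_symm_apply]
  · simp only [hInf, hSup, o.le_iff_le] at h ⊢
    exact he.compact A B h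

theorem IsCanonicalExtension.equiv_symm_comp {α : Type*} {e : L → C} (he : IsCanonicalExtension e)
    (o : α ≃ C) :
    letI := o.completeLattice
    IsCanonicalExtension (o.symm ∘ e) :=
  letI := o.completeLattice
  he.orderIso_comp ({ o with map_rel_iff' := Iff.rfl } : α ≃o C).symm

theorem sInf_image_finset_coe (e : BoundedLatticeHom L C) (T : Finset L) :
    sInf (e '' ↑T) = e (T.inf id) := by
  rw [map_finset_inf, Finset.inf_eq_iInf, sInf_image]
  rfl

theorem sSup_image_finset_coe (e : BoundedLatticeHom L C) (T : Finset L) :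
    sSup (e '' ↑T) = e (T.sup id) := by
  rw [map_finset_sup, Finset.sup_eq_iSup, sSup_image]
  rfl

end CanonicalExtension

section ConceptCompletion

variable {L : Type*} [Lattice L] [BoundedOrder L]

variable (L) in
abbrev SPHConcept := Concept (SPHsub L) (SPHsub L) (ES L)ᶜ

noncomputable def evalConcept : BoundedLatticeHom L (SPHConcept L) where
  toFun a := ⟨WaS L a, VaS L a, upperPolar_WaS a, lowerPolar_VaS a⟩
  map_sup' a b := Concept.ext' <| by
    ext f
    exact f.apply_sup_eq_false_iff
  map_inf' a b := Concept.ext <| by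
    ext f
    exact f.apply_inf_eq_true_iff
  map_top' := Concept.ext <| eq_univ_of_forall fun f => f.apply_top
  map_bot' := Concept.ext' <| eq_univ_of_forall fun f => f.apply_bot

theorem extent_evalConcept (a : L) : (evalConcept a).extent = WaS L a := rfl

theorem intent_evalConcept (a : L) : (evalConcept a).intent = VaS L a := rfl

theorem mem_extent_sInf_evalConcept_image {S : Set L} {g : SPHsub L} :
    g ∈ (sInf (evalConcept '' S)).extent ↔ S ⊆ pre1 g.1 := by
  simp [Concept.extent_sInf, extent_evalConcept, subset_def, WaS, pre1]

theorem mem_intent_sSup_evalConcept_image {S : Set L} {k : SPHsub L} :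
    k ∈ (sSup (evalConcept '' S)).intent ↔ S ⊆ pre0 k.1 := by
  simp [Concept.intent_sSup, intent_evalConcept, subset_def, VaS, pre0]

theorem sSup_meets_evalConcept (c : SPHConcept L) :
    sSup {x | (∃ S : Set L, x = sInf (evalConcept '' S)) ∧ x ≤ c} = c := by
  refine le_antisymm (sSup_le fun _ hx => hx.2) (Concept.extent_subset_extent_iff.1 fun f hf => ?_)
  set x := sInf (evalConcept '' pre1 f.1)
  have hfx : f ∈ x.extent := mem_extent_sInf_evalConcept_image.2 subset_rfl
  have hxc : x ≤ c := Concept.extent_subset_extent_iff.1 fun g hg => by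
    rw [← c.lowerPolar_intent]
    exact fun k hk => not_erelP_of_pre1_subset (mem_extent_sInf_evalConcept_image.1 hg)
      (c.rel_extent_intent hf hk)
  exact Concept.extent_subset_extent_iff.2 (le_sSup (by exact ⟨⟨_, rfl⟩, hxc⟩)) hfx

theorem sInf_joins_evalConcept (c : SPHConcept L) :
    sInf {x | (∃ S : Set L, x = sSup (evalConcept '' S)) ∧ c ≤ x} = c := by
  refine le_antisymm (Concept.intent_subset_intent_iff.1 fun k hk => ?_) (le_sInf fun _ hx => hx.2)
  set y := sSup (evalConcept '' pre0 k.1)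
  have hky : k ∈ y.intent := mem_intent_sSup_evalConcept_image.2 subset_rfl
  have hcy : c ≤ y := Concept.intent_subset_intent_iff.1 fun h hh => by
    rw [← c.upperPolar_extent]
    exact fun f hf => not_erelP_of_pre0_subset (mem_intent_sSup_evalConcept_image.1 hh)
      (c.rel_extent_intent hf hk)
  exact Concept.intent_subset_intent_iff.2 (sInf_le (by exact ⟨⟨_, rfl⟩, hcy⟩)) hky

theorem evalConcept_compact (A B : Set L)
    (h : sInf (evalConcept '' A) ≤ sSup (evalConcept '' B)) :
    ∃ A' B' : Finset L, ↑A' ⊆ A ∧ ↑B' ⊆ B ∧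
      sInf (evalConcept '' (A' : Set L)) ≤ sSup (evalConcept '' (B' : Set L)) := by
  by_contra hfin
  push Not at hfin
  set F := {c | ∃ T : Finset L, ↑T ⊆ A ∧ T.inf id ≤ c}
  set I := {c | ∃ T : Finset L, ↑T ⊆ B ∧ c ≤ T.sup id}
  have hFI : Disjoint F I := Set.disjoint_left.2 fun c ⟨T, hT, hTc⟩ ⟨T', hT', hcT'⟩ =>
    hfin T T' hT hT' <| by
      rw [sInf_image_finset_coe, sSup_image_finset_coe]
      exact OrderHomClass.mono evalConcept (hTc.trans hcT')
  let f : SPHsub L := ⟨ofPre F I,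
    ofPre_mem_SPHset (isLatFilter_finsetInf_upperClosure A) (isLatIdeal_finsetSup_lowerClosure B) hFI⟩
  have hfA : f ∈ (sInf (evalConcept '' A)).extent :=
    mem_extent_sInf_evalConcept_image.2 fun a ha =>
      (pre1_ofPre F I).symm ▸ ⟨{a}, by simpa using ha, by simp⟩
  have hfB : f ∈ (sSup (evalConcept '' B)).intent :=
    mem_intent_sSup_evalConcept_image.2 fun b hb =>
      (pre0_ofPre hFI).symm ▸ ⟨{b}, by simpa using hb, by simp⟩
  exact (sSup (evalConcept '' B)).rel_extent_intent (Concept.extent_subset_extent_iff.2 h hfA) hfB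
    (refl f)

theorem isCanonicalExtension_evalConcept : IsCanonicalExtension (evalConcept (L := L)) where
  injective a b hab := by
    have h : WaS L a = WaS L b := congrArg Concept.extent hab
    exact le_antisymm (WaS_subset_WaS_iff.1 h.le) (WaS_subset_WaS_iff.1 h.ge)
  map_inf := map_inf evalConcept
  map_sup := map_sup evalConcept
  map_top := map_top evalConcept
  map_bot := map_bot evalConcept
  sSup_meets_eq := sSup_meets_evalConcept
  sInf_joins_eq := sInf_joins_evalConcept
  compact := evalConcept_compact

end ConceptCompletion

/-- Let `L` be a bounded lattice and `Y = D̄♭(L)`. The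
complete lattice `C(Y) = MPE(Y,2)`, ordered by `φ ≤ ψ ↔ φ⁻¹(1) ⊆ ψ⁻¹(1)`,
together with the embedding `a ↦ ē_a`, is a canonical extension of `L`:
a completion of `L` that is dense and compact. -/
theorem stmt_17 (L : Type*) [Lattice L] [BoundedOrder L] :
    ∃ inst : CompleteLattice (CY L),
      (∀ φ ψ : CY L, inst.le φ ψ ↔ pre1 φ.1 ⊆ pre1 ψ.1) ∧
      ∃ e : L → CY L,
        (∀ a : L, (e a).1 = evalS L a) ∧
        Function.Injective e ∧
        (∀ a b : L, e (a ⊓ b) = inst.inf (e a) (e b)) ∧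
        (∀ a b : L, e (a ⊔ b) = inst.sup (e a) (e b)) ∧
        e ⊤ = inst.top ∧ e ⊥ = inst.bot ∧
        (∀ φ : CY L,
          φ = inst.sSup {ψ : CY L | (∃ S : Set L, ψ = inst.sInf (e '' S)) ∧ inst.le ψ φ} ∧
          φ = inst.sInf {ψ : CY L | (∃ S : Set L, ψ = inst.sSup (e '' S)) ∧ inst.le φ ψ}) ∧
        (∀ A B : Set L,
          inst.le (inst.sInf (e '' A)) (inst.sSup (e '' B)) →
          ∃ A' B' : Finset L, ↑A' ⊆ A ∧ ↑B' ⊆ B ∧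
            inst.le (inst.sInf (e '' ↑A')) (inst.sSup (e '' ↑B'))) := by
  let _ := (mpeEquivConcept (E := ES L)).completeLattice
  have he := (isCanonicalExtension_evalConcept (L := L)).equiv_symm_comp mpeEquivConcept
  exact ⟨_, fun φ ψ => Iff.rfl, _, fun a => ofPre_pre1_pre0 (evalS L a),
    he.injective, he.map_inf, he.map_sup, he.map_top, he.map_bot,
    fun φ => ⟨(he.sSup_meets_eq φ).symm, (he.sInf_joins_eq φ).symm⟩, he.compact⟩

end CanExt
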